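/- arXiv:1612.00728 — 2 statements merged into one kernel-verified Lean document; each statement's English description precedes it below -/
import Mathlib

section
/- The first Edwards distance d_E is a metric on isometry classes of compact metric spaces: it is symmetric, satisfies the triangle inequality, and d_E(X,Y) = 0 if and only if X and Y are isometric. -/
universe u

/-- The first Edwards distance: the infimum of `ε > 0` such that there exist maps
`f : X → Y` and `g : Y → X` each with distortion at most `ε`. -/
noncomputable def edwardsDist (X Y : Type u) [MetricSpace X] [MetricSpace Y] : ℝ :=
  sInf { ε : ℝ | 0 < ε ∧ ∃ (f : X → Y) (g : Y → X),
    (∀ x x' : X, |dist x x' - dist (f x) (f x')| ≤ ε) ∧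
    (∀ y y' : Y, |dist y y' - dist (g y) (g y')| ≤ ε) }

/-- The defining set of `edwardsDist`. -/
def edwardsSet (X Y : Type u) [MetricSpace X] [MetricSpace Y] : Set ℝ :=
  { ε : ℝ | 0 < ε ∧ ∃ (f : X → Y) (g : Y → X),
    (∀ x x' : X, |dist x x' - dist (f x) (f x')| ≤ ε) ∧
    (∀ y y' : Y, |dist y y' - dist (g y) (g y')| ≤ ε) }

lemma edwardsDist_eq (X Y : Type u) [MetricSpace X] [MetricSpace Y] :
    edwardsDist X Y = sInf (edwardsSet X Y) := rfl

lemma edwardsSet_bddBelow (X Y : Type u) [MetricSpace X] [MetricSpace Y] :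
    BddBelow (edwardsSet X Y) := ⟨0, fun _ hε => hε.1.le⟩

lemma edwardsSet_nonempty (X Y : Type u) [MetricSpace X] [MetricSpace Y]
    [CompactSpace X] [CompactSpace Y] [Nonempty X] [Nonempty Y] :
    (edwardsSet X Y).Nonempty := by
  obtain ⟨C, hC⟩ := Metric.isBounded_iff.mp (isCompact_univ (X := X)).isBounded
  obtain ⟨D, hD⟩ := Metric.isBounded_iff.mp (isCompact_univ (X := Y)).isBounded
  refine ⟨max C 0 + max D 0 + 1, ⟨by positivity, fun _ => Classical.arbitrary Y,
    fun _ => Classical.arbitrary X, fun x x' => ?_, fun y y' => ?_⟩⟩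
  · have h1 : dist x x' ≤ C := hC (Set.mem_univ x) (Set.mem_univ x')
    rw [dist_self, sub_zero, abs_of_nonneg dist_nonneg]
    have := le_max_left C (0:ℝ)
    have := le_max_right D (0:ℝ)
    linarith
  · have h1 : dist y y' ≤ D := hD (Set.mem_univ y) (Set.mem_univ y')
    rw [dist_self, sub_zero, abs_of_nonneg dist_nonneg]
    have := le_max_right C (0:ℝ)
    have := le_max_left D (0:ℝ)
    linarith

/-- From a sequence of maps with distortion tending to zero, extract an isometric
embedding, using an ultrafilter limit in a compact target. -/
lemma exists_isometry_of_approx (X Y : Type u) [MetricSpace X] [MetricSpace Y]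
    [CompactSpace Y]
    (h : ∀ n : ℕ, ∃ f : X → Y, ∀ x x' : X,
      |dist x x' - dist (f x) (f x')| ≤ 1 / (n + 1)) :
    ∃ F : X → Y, Isometry F := by
  choose f hf using h
  let U : Ultrafilter ℕ := Ultrafilter.of Filter.atTop
  have hU : (U : Filter ℕ) ≤ Filter.atTop := Ultrafilter.of_le _
  have key : ∀ x : X, ∃ y : Y, Filter.Tendsto (fun n => f n x) U (nhds y) := by
    intro x
    obtain ⟨y, -, hy⟩ := isCompact_univ.ultrafilter_le_nhds (U.map fun n => f n x)
      (by simp [Filter.le_principal_iff])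
    exact ⟨y, hy⟩
  choose F hF using key
  refine ⟨F, Isometry.of_dist_eq fun x x' => ?_⟩
  have h1 : Filter.Tendsto (fun n => dist (f n x) (f n x')) U
      (nhds (dist (F x) (F x'))) := (hF x).dist (hF x')
  have h2 : Filter.Tendsto (fun n : ℕ => dist (f n x) (f n x')) Filter.atTop
      (nhds (dist x x')) := by
    rw [tendsto_iff_dist_tendsto_zero]
    refine squeeze_zero (fun n => dist_nonneg) (fun n => ?_)
      tendsto_one_div_add_atTop_nhds_zero_nat
    rw [Real.dist_eq, abs_sub_comm]
    exact hf n x x'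
  exact tendsto_nhds_unique h1 (h2.mono_left hU)

/-- An isometric self-embedding of a compact metric space is surjective. -/
lemma isometry_surjective_of_compact {X : Type u} [MetricSpace X] [CompactSpace X]
    {h : X → X} (hi : Isometry h) : Function.Surjective h := by
  intro y
  by_contra hy
  have hyr : y ∉ Set.range h := by rintro ⟨x, rfl⟩; exact hy ⟨x, rfl⟩
  haveI : Nonempty X := ⟨y⟩
  have hcl : IsClosed (Set.range h) := (isCompact_range hi.continuous).isClosed
  have hr : 0 < Metric.infDist y (Set.range h) :=
    (hcl.notMem_iff_infDist_pos (Set.range_nonempty h)).mp hyr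
  set r := Metric.infDist y (Set.range h) with hrdef
  have hiter : ∀ n : ℕ, Isometry (h^[n]) := by
    intro n
    induction n with
    | zero => simpa using isometry_id
    | succ k ih => rw [Function.iterate_succ']; exact hi.comp ih
  have horb : ∀ n m : ℕ, n < m → r ≤ dist (h^[n] y) (h^[m] y) := by
    intro n m hnm
    have hm : h^[m] y = h^[n] (h^[m - n] y) := by
      rw [← Function.iterate_add_apply]; congr 1; omega
    rw [hm, Isometry.dist_eq (hiter n)]
    obtain ⟨k, hk⟩ : ∃ k, m - n = k + 1 := ⟨m - n - 1, by omega⟩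
    have hmem : h^[m - n] y ∈ Set.range h := by
      rw [hk, Function.iterate_succ_apply']; exact ⟨_, rfl⟩
    exact Metric.infDist_le_dist_of_mem hmem
  obtain ⟨x, -, φ, hφ, hconv⟩ :=
    isCompact_univ.tendsto_subseq (fun n : ℕ => Set.mem_univ (h^[n] y))
  have hcauchy : CauchySeq fun n => h^[φ n] y := hconv.cauchySeq
  obtain ⟨N, hN⟩ := Metric.cauchySeq_iff.mp hcauchy r hr
  have h1 := hN (N + 1) (by omega) N (le_refl N)
  have h2 := horb (φ N) (φ (N + 1)) (hφ (by omega))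
  rw [dist_comm] at h1
  exact absurd h1 (not_lt.mpr h2)

/-- The first Edwards distance is a metric on isometry classes of compact metric spaces:
it is symmetric, satisfies the triangle inequality, and vanishes iff the spaces are
isometric. -/
theorem edwardsDist_is_metric :
    (∀ (X Y : Type u) [MetricSpace X] [MetricSpace Y] [CompactSpace X] [CompactSpace Y]
        [Nonempty X] [Nonempty Y], edwardsDist X Y = edwardsDist Y X) ∧
    (∀ (X Y Z : Type u) [MetricSpace X] [MetricSpace Y] [MetricSpace Z]
        [CompactSpace X] [CompactSpace Y] [CompactSpace Z]
        [Nonempty X] [Nonempty Y] [Nonempty Z],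
        edwardsDist X Z ≤ edwardsDist X Y + edwardsDist Y Z) ∧
    (∀ (X Y : Type u) [MetricSpace X] [MetricSpace Y] [CompactSpace X] [CompactSpace Y]
        [Nonempty X] [Nonempty Y], (edwardsDist X Y = 0 ↔ Nonempty (X ≃ᵢ Y))) := by
  refine ⟨?_, ?_, ?_⟩
  · -- symmetry
    intro X Y _ _ _ _ _ _
    unfold edwardsDist
    congr 1
    ext ε
    constructor <;> rintro ⟨h1, f, g, hf, hg⟩ <;> exact ⟨h1, g, f, hg, hf⟩
  · -- triangle inequality
    intro X Y Z _ _ _ _ _ _ _ _ _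
    have hne1 := edwardsSet_nonempty X Y
    have hne2 := edwardsSet_nonempty Y Z
    have key : ∀ a ∈ edwardsSet X Y, ∀ b ∈ edwardsSet Y Z,
        edwardsDist X Z ≤ a + b := by
      rintro a ⟨ha, f1, g1, hf1, hg1⟩ b ⟨hb, f2, g2, hf2, hg2⟩
      rw [edwardsDist_eq]
      refine csInf_le (edwardsSet_bddBelow X Z) ⟨by linarith,
        fun x => f2 (f1 x), fun z => g1 (g2 z), fun x x' => ?_, fun z z' => ?_⟩
      · calc |dist x x' - dist (f2 (f1 x)) (f2 (f1 x'))|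
            ≤ |dist x x' - dist (f1 x) (f1 x')|
              + |dist (f1 x) (f1 x') - dist (f2 (f1 x)) (f2 (f1 x'))| :=
            abs_sub_le _ _ _
          _ ≤ a + b := add_le_add (hf1 x x') (hf2 _ _)
      · calc |dist z z' - dist (g1 (g2 z)) (g1 (g2 z'))|
            ≤ |dist z z' - dist (g2 z) (g2 z')|
              + |dist (g2 z) (g2 z') - dist (g1 (g2 z)) (g1 (g2 z'))| :=
            abs_sub_le _ _ _
          _ ≤ b + a := add_le_add (hg2 z z') (hg1 _ _)
          _ = a + b := add_comm b a
    have h1 : edwardsDist X Z - edwardsDist X Y ≤ edwardsDist Y Z := by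
      rw [edwardsDist_eq Y Z]
      refine le_csInf hne2 fun b hb => ?_
      have h2 : edwardsDist X Z - b ≤ edwardsDist X Y := by
        rw [edwardsDist_eq X Y]
        refine le_csInf hne1 fun a ha => ?_
        linarith [key a ha b hb]
      linarith
    linarith
  · -- vanishing iff isometric
    intro X Y _ _ _ _ _ _
    constructor
    · intro h0
      have hex : ∀ n : ℕ, ∃ (f : X → Y) (g : Y → X),
          (∀ x x' : X, |dist x x' - dist (f x) (f x')| ≤ 1 / (n + 1)) ∧
          (∀ y y' : Y, |dist y y' - dist (g y) (g y')| ≤ 1 / (n + 1)) := by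
        intro n
        have hpos : (0 : ℝ) < 1 / (n + 1) := by positivity
        have hlt : sInf (edwardsSet X Y) < 1 / (n + 1) := by
          rw [← edwardsDist_eq, h0]; exact hpos
        obtain ⟨ε, ⟨hε, f, g, hf, hg⟩, hlt'⟩ :=
          exists_lt_of_csInf_lt (edwardsSet_nonempty X Y) hlt
        exact ⟨f, g, fun x x' => (hf x x').trans hlt'.le,
          fun y y' => (hg y y').trans hlt'.le⟩
      choose f g hf hg using hex
      obtain ⟨F, hF⟩ := exists_isometry_of_approx X Y fun n => ⟨f n, hf n⟩
      obtain ⟨G, hG⟩ := exists_isometry_of_approx Y X fun n => ⟨g n, hg n⟩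
      have hsurj : Function.Surjective (G ∘ F) :=
        isometry_surjective_of_compact (hG.comp hF)
      have hGsurj : Function.Surjective G := fun x => by
        obtain ⟨x', hx'⟩ := hsurj x
        exact ⟨F x', hx'⟩
      exact ⟨(IsometryEquiv.mk (Equiv.ofBijective G ⟨hG.injective, hGsurj⟩) hG).symm⟩
    · rintro ⟨e⟩
      have hge : 0 ≤ edwardsDist X Y := by
        rw [edwardsDist_eq]
        exact le_csInf (edwardsSet_nonempty X Y) fun ε hε => hε.1.le
      have hle : ∀ ε : ℝ, 0 < ε → edwardsDist X Y ≤ ε := by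
        intro ε hε
        rw [edwardsDist_eq]
        refine csInf_le (edwardsSet_bddBelow X Y)
          ⟨hε, e, e.symm, fun x x' => ?_, fun y y' => ?_⟩
        · rw [e.dist_eq]; simpa using hε.le
        · rw [e.symm.dist_eq]; simpa using hε.le
      have : edwardsDist X Y ≤ 0 := by
        refine le_of_forall_pos_le_add fun ε hε => ?_
        simpa using hle ε hε
      linarith
end

section
/- The Gromov–Hausdorff space is not locally compact: no point of 𝓜 has a totally bounded neighborhood. In particular, for every compact metric space X and every r > 0, the closed ball of radius r around X in (𝓜, d_GH) is not totally bounded. -/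
/-!
Packing numbers can only drop under a small Gromov–Hausdorff perturbation: if `d_GH(X, Y) < δ`,
an `(ε + 2δ)`-separated family in `X` moves to an `ε`-separated family in `Y`. Hence the members
of a totally bounded set of compact spaces have uniformly bounded `ε`-packing numbers (compare
with the centres of a finite `ε/4`-net). But the ball of radius `r` around `X` contains every
`X × [0, r]ⁿ` (sup metric), whose `r/2`-packing number is at least `n`.
-/

open GromovHausdorff Metric Set
open scoped NNReal

theorem TotallyBounded.packingNumber_ne_top {X : Type*} [PseudoEMetricSpace X] {A : Set X}
    (hA : TotallyBounded A) {ε : ℝ≥0} (hε : ε ≠ 0) : packingNumber ε A ≠ ⊤ := by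
  obtain ⟨C, -, hC, hcover⟩ :=
    exists_finite_isCover_of_totallyBounded (ε := ε / 2) (by positivity) hA
  have hε2 : ε = 2 * (ε / 2) := by rw [mul_div_cancel₀ _ two_ne_zero]
  rw [← lt_top_iff_ne_top, hε2]
  calc packingNumber (2 * (ε / 2)) A ≤ externalCoveringNumber (ε / 2) A :=
        packingNumber_two_mul_le_externalCoveringNumber _ _
    _ ≤ C.encard := hcover.externalCoveringNumber_le_encard
    _ < ⊤ := hC.encard_lt_top

theorem coe_lt_edist_iff {X : Type*} [PseudoMetricSpace X] {ε : ℝ≥0} {x y : X} :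
    (ε : ENNReal) < edist x y ↔ (ε : ℝ) < dist x y := by
  rw [edist_nndist, ENNReal.coe_lt_coe, ← NNReal.coe_lt_coe, coe_nndist]

theorem dist_le_of_pi_Icc {ι : Type*} [Fintype ι] {a b : ℝ} (hab : a ≤ b)
    (z z' : ι → Icc a b) : dist z z' ≤ b - a :=
  (dist_pi_le_iff (sub_nonneg.2 hab)).2 fun i => Real.dist_le_of_mem_Icc (z i).2 (z' i).2

theorem natCast_le_packingNumber_prod_cube {X : Type*} [PseudoMetricSpace X] [Nonempty X]
    (n : ℕ) {ε : ℝ≥0} {r : ℝ} (hεr : ε < r) :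
    (n : ℕ∞) ≤ packingNumber ε (univ : Set (X × (Fin n → Icc (0 : ℝ) r))) := by
  have hr : 0 < r := ε.coe_nonneg.trans_lt hεr
  let e : Fin n → X × (Fin n → Icc (0 : ℝ) r) := fun i =>
    (Classical.arbitrary X, fun j => if j = i then ⟨r, hr.le, le_rfl⟩ else ⟨0, le_rfl, hr.le⟩)
  have hsep : ∀ i j, i ≠ j → r ≤ dist (e i) (e j) := fun i j hij =>
    calc r = dist ((e i).2 i) ((e j).2 i) := by simp [e, hij, Subtype.dist_eq, abs_of_pos hr]
      _ ≤ dist (e i).2 (e j).2 := dist_le_pi_dist _ _ i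
      _ ≤ dist (e i) (e j) := le_max_right _ _
  have hinj : Function.Injective e := fun i j h =>
    by_contra fun hij => (hsep i j hij).not_gt (by rwa [h, dist_self])
  calc (n : ℕ∞) = (range e).encard := by
        rw [← image_univ, hinj.encard_image]; simp
    _ ≤ _ := by
        refine IsSeparated.encard_le_packingNumber (subset_univ _) ?_
        rintro _ ⟨i, rfl⟩ _ ⟨j, rfl⟩ hij
        exact coe_lt_edist_iff.2 (hεr.trans_le (hsep i j (ne_of_apply_ne e hij)))

namespace GromovHausdorff

theorem exists_dist_optimalGHInj_lt {X Y : Type*} [MetricSpace X] [CompactSpace X] [Nonempty X]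
    [MetricSpace Y] [CompactSpace Y] [Nonempty Y] {δ : ℝ} (h : ghDist X Y < δ) (x : X) :
    ∃ y : Y, dist (optimalGHInjl X Y x) (optimalGHInjr X Y y) < δ := by
  have hfin := hausdorffEDist_ne_top_of_nonempty_of_bounded (range_nonempty _) (range_nonempty _)
    (isCompact_range (isometry_optimalGHInjl X Y).continuous).isBounded
    (isCompact_range (isometry_optimalGHInjr X Y).continuous).isBounded
  obtain ⟨_, ⟨y, rfl⟩, hy⟩ := exists_dist_lt_of_hausdorffDist_lt (mem_range_self x)
    (hausdorffDist_optimal (X := X) (Y := Y) ▸ h) hfin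
  exact ⟨y, hy⟩

theorem packingNumber_add_two_mul_le_of_ghDist_lt {X Y : Type*} [MetricSpace X] [CompactSpace X]
    [Nonempty X] [MetricSpace Y] [CompactSpace Y] [Nonempty Y] {ε δ : ℝ≥0}
    (h : ghDist X Y < δ) :
    packingNumber (ε + 2 * δ) (univ : Set X) ≤ packingNumber ε (univ : Set Y) := by
  set Φ := optimalGHInjl X Y
  set Ψ := optimalGHInjr X Y
  choose g hg using exists_dist_optimalGHInj_lt h
  have hsep : ∀ x x', (ε + 2 * δ : ℝ) < dist x x' → (ε : ℝ) < dist (g x) (g x') := by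
    intro x x' hxx'
    have := dist_triangle4 (Φ x) (Ψ (g x)) (Ψ (g x')) (Φ x')
    rw [(isometry_optimalGHInjl X Y).dist_eq, (isometry_optimalGHInjr X Y).dist_eq,
      dist_comm (Ψ (g x'))] at this
    linarith [hg x, hg x']
  refine iSup₂_le fun C _ => iSup_le fun hC => ?_
  replace hC : C.Pairwise fun x x' => (ε : ℝ) < dist (g x) (g x') :=
    hC.imp fun x x' hxx' => hsep x x' (by exact_mod_cast coe_lt_edist_iff.1 hxx')
  have hinj : InjOn g C := fun x hx x' hx' hgx => by
    by_contra hne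
    exact dist_pos.1 (ε.coe_nonneg.trans_lt (hC hx hx' hne)) hgx
  rw [← hinj.encard_image]
  exact IsSeparated.encard_le_packingNumber (subset_univ _)
    (hinj.pairwise_image.2 (hC.imp fun x x' => coe_lt_edist_iff.2))

theorem _root_.TotallyBounded.exists_packingNumber_le {S : Set GHSpace} (hS : TotallyBounded S)
    {ε : ℝ≥0} (hε : ε ≠ 0) :
    ∃ N : ℕ, ∀ (X : Type) [MetricSpace X] [CompactSpace X] [Nonempty X],
      toGHSpace X ∈ S → packingNumber ε (univ : Set X) ≤ N := by
  obtain ⟨t, ht, hcover⟩ := Metric.totallyBounded_iff.1 hS ((ε / 4 : ℝ≥0) : ℝ) (by positivity)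
  have hfin : ∀ q : GHSpace, packingNumber (ε / 2) (univ : Set q.Rep) ≠ ⊤ := fun q =>
    TotallyBounded.packingNumber_ne_top isCompact_univ.totallyBounded (by positivity)
  refine ⟨ht.toFinset.sup fun q => (packingNumber (ε / 2) (univ : Set q.Rep)).toNat, ?_⟩
  intro X _ _ _ hX
  obtain ⟨q, hq, hXq⟩ := mem_iUnion₂.1 (hcover hX)
  have hdist : ghDist X q.Rep < (ε / 4 : ℝ≥0) := by
    rwa [ghDist, q.toGHSpace_rep]
  have hε' : ε = ε / 2 + 2 * (ε / 4) := by ring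
  calc packingNumber ε (univ : Set X)
      = packingNumber (ε / 2 + 2 * (ε / 4)) (univ : Set X) := by rw [← hε']
    _ ≤ packingNumber (ε / 2) (univ : Set q.Rep) :=
        packingNumber_add_two_mul_le_of_ghDist_lt hdist
    _ = (packingNumber (ε / 2) (univ : Set q.Rep)).toNat := (ENat.natCast_toNat (hfin q)).symm
    _ ≤ _ := by
        gcongr
        exact Finset.le_sup (f := fun q => (packingNumber (ε / 2) (univ : Set q.Rep)).toNat)
          (ht.mem_toFinset.2 hq)

theorem ghDist_prod_le {X Z : Type*} [MetricSpace X] [CompactSpace X] [Nonempty X]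
    [MetricSpace Z] [CompactSpace Z] [Nonempty Z] {r : ℝ} (hr : 0 ≤ r)
    (hZ : ∀ z z' : Z, dist z z' ≤ r) : ghDist (X × Z) X ≤ r := by
  let z₀ := Classical.arbitrary Z
  have hiso : Isometry fun x : X => (x, z₀) := Isometry.of_dist_eq fun x y => by
    simp [Prod.dist_eq]
  refine (ghDist_le_hausdorffDist isometry_id hiso).trans <| hausdorffDist_le_of_mem_dist hr ?_ ?_
  · rintro ⟨x, z⟩ -
    exact ⟨(x, z₀), mem_range_self x, by simpa [Prod.dist_eq] using hZ z z₀⟩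
  · rintro _ ⟨x, rfl⟩
    exact ⟨(x, z₀), mem_range_self _, by simp [hr]⟩

end GromovHausdorff

/-- The Gromov–Hausdorff space is not locally compact: no point has a totally bounded
neighborhood; in particular no closed ball of positive radius is totally bounded. -/
theorem ghSpace_not_locallyCompact :
    (∀ p : GHSpace, ∀ s ∈ nhds p, ¬ TotallyBounded s) ∧
    (∀ p : GHSpace, ∀ r : ℝ, 0 < r → ¬ TotallyBounded (closedBall p r)) := by
  have hball : ∀ p : GHSpace, ∀ r : ℝ, 0 < r → ¬ TotallyBounded (closedBall p r) := by
    intro p r hr htb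
    set ε := (r / 2).toNNReal
    have hεr : (ε : ℝ) < r := by rw [Real.coe_toNNReal _ (by positivity)]; linarith
    obtain ⟨N, hN⟩ := htb.exists_packingNumber_le (Real.toNNReal_pos.2 (half_pos hr)).ne'
    have : Nonempty (Icc (0 : ℝ) r) := ⟨⟨0, le_rfl, hr.le⟩⟩
    let Y := p.Rep × (Fin (N + 1) → Icc (0 : ℝ) r)
    have hY : toGHSpace Y ∈ closedBall p r := by
      have := ghDist_prod_le (X := p.Rep) hr.le
        (by simpa using dist_le_of_pi_Icc (ι := Fin (N + 1)) hr.le)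
      rwa [ghDist, p.toGHSpace_rep] at this
    have := (natCast_le_packingNumber_prod_cube (X := p.Rep) (N + 1) hεr).trans (hN Y hY)
    norm_cast at this
    omega
  refine ⟨fun p s hs htb => ?_, hball⟩
  obtain ⟨r, hr, hsub⟩ := nhds_basis_closedBall.mem_iff.1 hs
  exact hball p r hr (htb.subset hsub)
end
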